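/- arXiv:2311.04070 — 3 statements merged into one kernel-verified Lean document; each statement's English description precedes it below -/
import Mathlib

section
/- The mixed composition product distributes over the shuffle product in its left argument: for all noncommutative formal power series c, d over the alphabet X = {x0, x1} and every pair z = (z1, z2) of formal power series, (c ⧢ d) ∘̃ z = (c ∘̃ z) ⧢ (d ∘̃ z), where ⧢ is the shuffle product and ∘̃ is the mixed composition product. -/
/-- Words over the alphabet X = {x₀, x₁}, encoded as lists of booleans
(`false` ↔ x₀, `true` ↔ x₁). -/
abbrev Word : Type := List Bool

/-- Noncommutative formal power series over X with real coefficients. -/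
abbrev Series : Type := Word → ℝ

/-- Auxiliary recursion computing the coefficient of the shuffle product. -/
def sh : Word → Series → Series → ℝ
  | [], c, d => c [] * d []
  | a :: w, c, d => sh w (fun u => c (a :: u)) d + sh w c (fun u => d (a :: u))

/-- The shuffle product of two series. -/
def shuffle (c d : Series) : Series := fun w => sh w c d

/-- Left concatenation by the letter x₀. -/
def X0f (c : Series) : Series := fun w =>
  match w with
  | false :: w' => c w'
  | _ => 0

/-- Left concatenation by the letter x₁. -/
def X1f (c : Series) : Series := fun w =>
  match w with
  | true :: w' => c w'
  | _ => 0

/-- The indicator series of a word. -/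
def deltaW (η : Word) : Series := fun w => if w = η then 1 else 0

/-- The shuffle unit 1∅. -/
def oneS : Series := deltaW []

/-- Mixed composition product of a word with a pair of series:
∅ ∘̃ z = ∅, (x₀η) ∘̃ z = x₀(η ∘̃ z),
(x₁η) ∘̃ z = x₁(z₁ ⧢ (η ∘̃ z)) + x₀(z₂ ⧢ (η ∘̃ z)). -/
def wmix : Word → Series × Series → Series
  | [], _ => oneS
  | false :: η, z => X0f (wmix η z)
  | true :: η, z => X1f (shuffle z.1 (wmix η z)) + X0f (shuffle z.2 (wmix η z))

/-- Mixed composition product `c ∘̃ z`, extended linearly in the left argument.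
(Since `wmix η z` vanishes on words shorter than `η`, the sum may be truncated.) -/
def mixcomp (c : Series) (z : Series × Series) : Series := fun w =>
  ∑ n ∈ Finset.range (w.length + 1), ∑ f : Fin n → Bool,
    c (List.ofFn f) * wmix (List.ofFn f) z w

/-- Composition product of a word with a series:
∅ ∘ d = ∅, (x₀η) ∘ d = x₀(η ∘ d), (x₁η) ∘ d = x₀(d ⧢ (η ∘ d)). -/
def wcomp : Word → Series → Series
  | [], _ => oneS
  | false :: η, d => X0f (wcomp η d)
  | true :: η, d => X0f (shuffle d (wcomp η d))

/-- Composition product `c ∘ d`, extended linearly in the left argument. -/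
def compP (c d : Series) : Series := fun w =>
  ∑ n ∈ Finset.range (w.length + 1), ∑ f : Fin n → Bool,
    c (List.ofFn f) * wcomp (List.ofFn f) d w

/-- The group product on G: (c₁,c₂)·(d₁,d₂) = (c₁ ⧢ d₁, c₂ + c₁ ⧢ d₂). -/
def gmul (c d : Series × Series) : Series × Series :=
  (shuffle c.1 d.1, c.2 + shuffle c.1 d.2)

/-- The identity element e = (1∅, 0) of G. -/
def geId : Series × Series := (oneS, 0)

/-- Shuffle powers. -/
def shPow (c : Series) : ℕ → Series
  | 0 => oneS
  | n + 1 => shuffle c (shPow c n)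

/-- Shuffle inverse of a series with constant coefficient 1, via the
geometric series c^{⧢ -1} = Σ_k (1∅ - c)^{⧢ k} (truncated by word length,
which is exact since 1∅ - c is proper). -/
def shInv (c : Series) : Series := fun w =>
  ∑ k ∈ Finset.range (w.length + 1), shPow (oneS - c) k w

/-- The group inverse in (G,·). -/
def ginv (c : Series × Series) : Series × Series :=
  (shInv c.1, -(shuffle (shInv c.1) c.2))

/-- The product ◁ on G, componentwise mixed composition. -/
def triOp (c d : Series × Series) : Series × Series :=
  (mixcomp c.1 d, mixcomp c.2 d)

/-- The Grossman–Larson product c ⋆ d = (c ◁ d) · d. -/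
def starOp (c d : Series × Series) : Series × Series := gmul (triOp c d) d

/-!
Write `x_a⁻¹` (`leftShift a`) for the left shift `(x_a⁻¹ c)(u) = c(a u)`. It is a derivation of
the shuffle product, and the recursion defining `∘̃` says
`x₁⁻¹(c ∘̃ z) = z₁ ⧢ (x₁⁻¹c ∘̃ z)` and `x₀⁻¹(c ∘̃ z) = x₀⁻¹c ∘̃ z + z₂ ⧢ (x₁⁻¹c ∘̃ z)`.
So the left shifts of both sides of the identity are expressed through the identity for the
shifted series `x_a⁻¹c`, `x_a⁻¹d` on shorter words, and commutativity and associativity of `⧢`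
match the two expressions; induction on the length of the word concludes.
-/

open Finset

theorem Fintype.sum_pi_fin_succ {α M : Type*} [Fintype α] [AddCommMonoid M] {n : ℕ}
    (F : (Fin (n + 1) → α) → M) : ∑ f, F f = ∑ a, ∑ g : Fin n → α, F (Fin.cons a g) := by
  rw [← (Fin.consEquiv fun _ => α).sum_comp, Fintype.sum_prod_type]
  rfl

def leftShift (a : Bool) : Series →ₗ[ℝ] Series := LinearMap.funLeft ℝ ℝ (List.cons a)

@[simp]
theorem leftShift_apply (a : Bool) (c : Series) (u : Word) : leftShift a c u = c (a :: u) := rfl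

section Shuffle

variable (a : Bool) (w : Word) (c d e : Series)

theorem shuffle_nil : shuffle c d [] = c [] * d [] := rfl

theorem shuffle_cons :
    shuffle c d (a :: w) = shuffle (leftShift a c) d w + shuffle c (leftShift a d) w := rfl

theorem leftShift_shuffle :
    leftShift a (shuffle c d) = shuffle (leftShift a c) d + shuffle c (leftShift a d) := rfl

theorem shuffle_comm : shuffle c d = shuffle d c := by
  funext w
  induction w generalizing c d with
  | nil => exact mul_comm _ _
  | cons a w ih => rw [shuffle_cons, shuffle_cons, ih (leftShift a c), ih c, add_comm]

theorem shuffle_add_right : shuffle c (d + e) = shuffle c d + shuffle c e := by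
  funext w
  induction w generalizing c d e with
  | nil => exact mul_add _ _ _
  | cons a w ih =>
    simp only [Pi.add_apply, shuffle_cons, map_add, ih]
    ring

theorem shuffle_smul_right (r : ℝ) : shuffle c (r • d) = r • shuffle c d := by
  funext w
  induction w generalizing c d with
  | nil => exact mul_left_comm _ _ _
  | cons a w ih =>
    simp only [Pi.smul_apply, smul_eq_mul, shuffle_cons, map_smul, ih]
    ring

theorem shuffle_add_left : shuffle (c + d) e = shuffle c e + shuffle d e := by
  rw [shuffle_comm, shuffle_add_right, shuffle_comm e, shuffle_comm e]

theorem shuffle_assoc : shuffle (shuffle c d) e = shuffle c (shuffle d e) := by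
  funext w
  induction w generalizing c d e with
  | nil => exact mul_assoc _ _ _
  | cons a w ih =>
    simp only [shuffle_cons, leftShift_shuffle, shuffle_add_left, shuffle_add_right,
      Pi.add_apply, ih]
    ring

theorem shuffle_left_comm : shuffle c (shuffle d e) = shuffle d (shuffle c e) := by
  rw [← shuffle_assoc, shuffle_comm c d, shuffle_assoc]

def shuffleLeft (c : Series) : Series →ₗ[ℝ] Series where
  toFun := shuffle c
  map_add' := shuffle_add_right c
  map_smul' r d := shuffle_smul_right c d r

theorem shuffleLeft_apply : shuffleLeft c d = shuffle c d := rfl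

variable {w c d}

theorem shuffle_apply_congr {c' d' : Series}
    (hc : ∀ u : Word, u.length ≤ w.length → c u = c' u)
    (hd : ∀ u : Word, u.length ≤ w.length → d u = d' u) :
    shuffle c d w = shuffle c' d' w := by
  induction w generalizing c c' d d' with
  | nil => simp only [shuffle_nil, hc [] le_rfl, hd [] le_rfl]
  | cons a w ih =>
    have shift {f f' : Series} (hf : ∀ u : Word, u.length ≤ (a :: w).length → f u = f' u) :
        ∀ u : Word, u.length ≤ w.length → leftShift a f u = leftShift a f' u :=
      fun u hu => hf (a :: u) (Nat.succ_le_succ hu)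
    have restrict {f f' : Series} (hf : ∀ u : Word, u.length ≤ (a :: w).length → f u = f' u) :
        ∀ u : Word, u.length ≤ w.length → f u = f' u :=
      fun u hu => hf u (hu.trans (Nat.le_succ _))
    rw [shuffle_cons, shuffle_cons, ih (shift hc) (restrict hd), ih (restrict hc) (shift hd)]

end Shuffle

section Mixcomp

variable (z : Series × Series)

theorem leftShift_oneS (a : Bool) : leftShift a oneS = 0 := by
  ext u
  simp [oneS, deltaW]

theorem leftShift_false_wmix_false (η : Word) :
    leftShift false (wmix (false :: η) z) = wmix η z := rfl

theorem leftShift_true_wmix_false (η : Word) : leftShift true (wmix (false :: η) z) = 0 := rfl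

theorem leftShift_true_wmix_true (η : Word) :
    leftShift true (wmix (true :: η) z) = shuffle z.1 (wmix η z) := by
  ext u
  simp [wmix, X0f, X1f]

theorem leftShift_false_wmix_true (η : Word) :
    leftShift false (wmix (true :: η) z) = shuffle z.2 (wmix η z) := by
  ext u
  simp [wmix, X0f, X1f]

theorem wmix_cons_nil (b : Bool) (η : Word) : wmix (b :: η) z [] = 0 := by
  cases b <;> simp [wmix, X0f, X1f]

theorem wmix_apply_of_length_lt {η u : Word} (h : u.length < η.length) : wmix η z u = 0 := by
  induction η generalizing u with
  | nil => exact absurd h (Nat.not_lt_zero _)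
  | cons b η ih =>
    rcases u with _ | ⟨a, u⟩
    · exact wmix_cons_nil z b η
    have hη : ∀ v : Word, v.length ≤ u.length → wmix η z v = 0 :=
      fun v hv => ih (hv.trans_lt (Nat.lt_of_succ_lt_succ h))
    have hsh (y : Series) : shuffle y (wmix η z) u = 0 :=
      (shuffle_apply_congr (fun _ _ => rfl) hη).trans (congrFun (map_zero (shuffleLeft y)) u)
    cases a <;> cases b
    · exact hη u le_rfl
    · exact (congrFun (leftShift_false_wmix_true z η) u).trans (hsh z.2)
    · rfl
    · exact (congrFun (leftShift_true_wmix_true z η) u).trans (hsh z.1)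

/-- Since `wmix η z` vanishes on words shorter than `η`, every truncation at `N ≥ |w|` has the
coefficient of `c ∘̃ z` at `w`; unlike `mixcomp`, a fixed truncation is a finite linear
combination of series, through which shuffles and left shifts pass. -/
def mixcompTrunc (N : ℕ) (c : Series) : Series :=
  ∑ n ∈ range (N + 1), ∑ f : Fin n → Bool, c (List.ofFn f) • wmix (List.ofFn f) z

theorem mixcomp_apply_eq_mixcompTrunc {N : ℕ} {w : Word} (h : w.length ≤ N) (c : Series) :
    mixcomp c z w = mixcompTrunc z N c w := by
  simp only [mixcomp, mixcompTrunc, Finset.sum_apply, Pi.smul_apply, smul_eq_mul]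
  refine sum_subset (range_subset_range.mpr (by omega)) fun n _ hn => ?_
  refine sum_eq_zero fun f _ => ?_
  rw [wmix_apply_of_length_lt z (by simp at hn ⊢; omega), mul_zero]

theorem mixcompTrunc_succ (N : ℕ) (c : Series) :
    mixcompTrunc z (N + 1) c = c [] • oneS + ∑ n ∈ range (N + 1), ∑ a : Bool,
      ∑ g : Fin n → Bool, c (a :: List.ofFn g) • wmix (a :: List.ofFn g) z := by
  rw [mixcompTrunc, sum_range_succ', add_comm]
  simp [Fintype.sum_pi_fin_succ, wmix]

theorem leftShift_true_mixcompTrunc_succ (N : ℕ) (c : Series) :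
    leftShift true (mixcompTrunc z (N + 1) c) =
      shuffle z.1 (mixcompTrunc z N (leftShift true c)) := by
  rw [mixcompTrunc_succ, mixcompTrunc, ← shuffleLeft_apply]
  simp only [map_add, map_sum, map_smul, leftShift_oneS, Fintype.sum_bool,
    leftShift_true_wmix_true, leftShift_true_wmix_false, leftShift_apply, shuffleLeft_apply,
    smul_zero, sum_const_zero, add_zero, zero_add]

theorem leftShift_false_mixcompTrunc_succ (N : ℕ) (c : Series) :
    leftShift false (mixcompTrunc z (N + 1) c) =
      mixcompTrunc z N (leftShift false c) + shuffle z.2 (mixcompTrunc z N (leftShift true c)) := by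
  rw [mixcompTrunc_succ, mixcompTrunc, mixcompTrunc, ← shuffleLeft_apply]
  simp only [map_add, map_sum, map_smul, leftShift_oneS, Fintype.sum_bool,
    leftShift_false_wmix_true, leftShift_false_wmix_false, leftShift_apply, shuffleLeft_apply,
    smul_zero, zero_add, sum_add_distrib, add_comm]

theorem mixcomp_nil (c : Series) : mixcomp c z [] = c [] := by
  simp [mixcomp, wmix, oneS, deltaW]

theorem mixcomp_add (c d : Series) : mixcomp (c + d) z = mixcomp c z + mixcomp d z := by
  ext w
  simp only [mixcomp, Pi.add_apply, add_mul, sum_add_distrib]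

theorem shuffle_mixcomp_apply (y c : Series) {N : ℕ} {w : Word} (h : w.length ≤ N) :
    shuffle y (mixcomp c z) w = shuffle y (mixcompTrunc z N c) w :=
  shuffle_apply_congr (fun _ _ => rfl) fun _ hu => mixcomp_apply_eq_mixcompTrunc z (hu.trans h) c

theorem leftShift_true_mixcomp (c : Series) :
    leftShift true (mixcomp c z) = shuffle z.1 (mixcomp (leftShift true c) z) := by
  ext w
  rw [shuffle_mixcomp_apply z _ _ le_rfl, ← leftShift_true_mixcompTrunc_succ]
  exact mixcomp_apply_eq_mixcompTrunc z (w := true :: w) le_rfl c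

theorem leftShift_false_mixcomp (c : Series) :
    leftShift false (mixcomp c z) =
      mixcomp (leftShift false c) z + shuffle z.2 (mixcomp (leftShift true c) z) := by
  ext w
  rw [Pi.add_apply, shuffle_mixcomp_apply z _ _ le_rfl,
    mixcomp_apply_eq_mixcompTrunc z le_rfl (leftShift false c), ← Pi.add_apply,
    ← leftShift_false_mixcompTrunc_succ]
  exact mixcomp_apply_eq_mixcompTrunc z (w := false :: w) le_rfl c

theorem mixcomp_shuffle_apply_cons {w : Word}
    (ih : ∀ c d : Series, ∀ u : Word, u.length ≤ w.length →
      mixcomp (shuffle c d) z u = shuffle (mixcomp c z) (mixcomp d z) u)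
    (a : Bool) (c d : Series) :
    mixcomp (shuffle c d) z (a :: w) = shuffle (mixcomp c z) (mixcomp d z) (a :: w) := by
  have shift (b : Bool) : ∀ u : Word, u.length ≤ w.length →
      mixcomp (leftShift b (shuffle c d)) z u =
        (shuffle (mixcomp (leftShift b c) z) (mixcomp d z) +
          shuffle (mixcomp c z) (mixcomp (leftShift b d) z)) u := fun u hu => by
    rw [leftShift_shuffle, mixcomp_add, Pi.add_apply, Pi.add_apply, ih _ _ u hu, ih _ _ u hu]
  change leftShift a (mixcomp (shuffle c d) z) w = _
  rw [shuffle_cons]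
  cases a
  · rw [leftShift_false_mixcomp, Pi.add_apply, shift false w le_rfl,
      shuffle_apply_congr (fun _ _ => rfl) (shift true), leftShift_false_mixcomp,
      leftShift_false_mixcomp, shuffle_add_left, shuffle_add_right, shuffle_add_right,
      shuffle_assoc, shuffle_left_comm z.2 (mixcomp c z)]
    simp only [Pi.add_apply]
    ring
  · rw [leftShift_true_mixcomp, shuffle_apply_congr (fun _ _ => rfl) (shift true),
      leftShift_true_mixcomp, leftShift_true_mixcomp, shuffle_add_right, shuffle_assoc,
      shuffle_left_comm z.1 (mixcomp c z)]
    rfl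

end Mixcomp

/-- The mixed composition product distributes over the shuffle
product in its left argument: (c ⧢ d) ∘̃ z = (c ∘̃ z) ⧢ (d ∘̃ z). -/
theorem mixcomp_shuffle_distrib (c d : Series) (z : Series × Series) :
    mixcomp (shuffle c d) z = shuffle (mixcomp c z) (mixcomp d z) := by
  suffices h : ∀ n : ℕ, ∀ c d : Series, ∀ w : Word, w.length < n →
      mixcomp (shuffle c d) z w = shuffle (mixcomp c z) (mixcomp d z) w from
    funext fun w => h (w.length + 1) c d w (Nat.lt_succ_self _)
  intro n
  induction n with
  | zero => exact fun _ _ _ hw => absurd hw (Nat.not_lt_zero _)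
  | succ n ih =>
    rintro c d (_ | ⟨a, w⟩) hw
    · simp only [mixcomp_nil, shuffle_nil]
    · exact mixcomp_shuffle_apply_cons z
        (fun c d u hu => ih c d u (hu.trans_lt (Nat.lt_of_succ_lt_succ hw))) a c d
end

section
/- If (G, ·, ◁) is a post-group, then the Grossman–Larson product a ⋆ b := (a ◁ b) · b makes (G, ⋆) a group sharing the identity with (G, ·), and the ⋆-inverse of a is (R_a)^{-1}(a^{·-1}), where R_a(b) = b ◁ a. -/
/-!
Each `R_a = (· ◁ a)` is a homomorphism, so `R_a 1 = 1`, and injectivity of `R_1` together with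
`R_1 ∘ R_1 = R_{R_1 1 · 1} = R_1` gives `R_1 = id`; hence `1` is a two-sided unit for
`a ⋆ b = R_b(a) · b`. Associativity is the composition law read through the homomorphism
property of `R_c`. Surjectivity of `R_b` provides a left `⋆`-inverse `c` with `c ◁ b = b⁻¹` of
every `b`, and in a monoid where every element has a left inverse, left inverses are two-sided.
-/

namespace PostGroup

variable {G : Type*} [Group G]

/-- The Grossman–Larson product `a ⋆ b = (a ◁ b) · b`. -/
def glMul (tri : G → G → G) (a b : G) : G := tri a b * b

variable {tri : G → G → G}

theorem tri_one_left (hmul : ∀ a b c : G, tri (b * c) a = tri b a * tri c a) (a : G) :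
    tri 1 a = 1 :=
  (MonoidHom.mk' (fun b => tri b a) (hmul a)).map_one

theorem tri_one_right (hinj : Function.Injective fun b => tri b 1)
    (hmul : ∀ a b c : G, tri (b * c) a = tri b a * tri c a)
    (hcomp : ∀ a b c : G, tri (tri c b) a = tri c (tri b a * a)) (c : G) :
    tri c 1 = c :=
  hinj <| by simpa only [tri_one_left hmul, one_mul] using hcomp 1 1 c

theorem glMul_one (hinj : Function.Injective fun b => tri b 1)
    (hmul : ∀ a b c : G, tri (b * c) a = tri b a * tri c a)
    (hcomp : ∀ a b c : G, tri (tri c b) a = tri c (tri b a * a)) (a : G) :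
    glMul tri a 1 = a := by
  rw [glMul, tri_one_right hinj hmul hcomp, mul_one]

theorem one_glMul (hmul : ∀ a b c : G, tri (b * c) a = tri b a * tri c a) (a : G) :
    glMul tri 1 a = a := by
  rw [glMul, tri_one_left hmul, one_mul]

theorem glMul_assoc (hmul : ∀ a b c : G, tri (b * c) a = tri b a * tri c a)
    (hcomp : ∀ a b c : G, tri (tri c b) a = tri c (tri b a * a)) (a b c : G) :
    glMul tri (glMul tri a b) c = glMul tri a (glMul tri b c) := by
  simp only [glMul]
  rw [hmul, hcomp, mul_assoc]

theorem glMul_eq_one_of_tri_eq_inv {a b : G} (h : tri b a = a⁻¹) : glMul tri b a = 1 := by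
  rw [glMul, h, inv_mul_cancel]

theorem glMul_eq_one_of_glMul_eq_one (hsurj : ∀ b : G, Function.Surjective fun c => tri c b)
    (hmul : ∀ a b c : G, tri (b * c) a = tri b a * tri c a)
    (hcomp : ∀ a b c : G, tri (tri c b) a = tri c (tri b a * a)) {a b : G}
    (h : glMul tri b a = 1) : glMul tri a b = 1 := by
  obtain ⟨c, hc⟩ := hsurj b b⁻¹
  have hcb : glMul tri c b = 1 := glMul_eq_one_of_tri_eq_inv hc
  calc glMul tri a b
      = glMul tri (glMul tri c b) (glMul tri a b) := by rw [hcb, one_glMul hmul]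
    _ = glMul tri c (glMul tri (glMul tri b a) b) := by
        rw [glMul_assoc hmul hcomp, glMul_assoc hmul hcomp]
    _ = 1 := by rw [h, one_glMul hmul, hcb]

end PostGroup

open PostGroup in
/-- in a post-group (G, ·, ◁) (each R_a : b ↦ b ◁ a is an
automorphism of (G,·) and R_a ∘ R_b = R_{R_a(b)·a}), the Grossman–Larson
product a ⋆ b := (a ◁ b) · b is associative, shares the identity with (G,·),
and the ⋆-inverse of a is (R_a)⁻¹(a⁻¹), i.e. the b with b ◁ a = a⁻¹. -/
theorem grossman_larson_group {G : Type*} [Group G] (tri : G → G → G)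
    (hbij : ∀ a : G, Function.Bijective fun b => tri b a)
    (hmul : ∀ a b c : G, tri (b * c) a = tri b a * tri c a)
    (hcomp : ∀ a b c : G, tri (tri c b) a = tri c (tri b a * a)) :
    (∀ a b c : G,
      tri (tri a b * b) c * c = tri a (tri b c * c) * (tri b c * c)) ∧
    (∀ a : G, tri a 1 * 1 = a ∧ tri 1 a * a = a) ∧
    (∀ a b : G, tri b a = a⁻¹ → tri b a * a = 1 ∧ tri a b * b = 1) :=
  ⟨glMul_assoc hmul hcomp,
    fun a => ⟨glMul_one (hbij 1).1 hmul hcomp a, one_glMul hmul a⟩,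
    fun _ _ h => have hba := glMul_eq_one_of_tri_eq_inv h
      ⟨hba, glMul_eq_one_of_glMul_eq_one (fun b => (hbij b).2) hmul hcomp hba⟩⟩
end

section
/- The bracket on the tangent space of (G, ·) is given by [η e_i, ζ e_j] = (η ⧢ ζ) e_j δ_{i,1} − (η ⧢ ζ) e_i δ_{j,1}; in particular it vanishes when i = j, equals (η ⧢ ζ) e_2 when (i, j) = (1, 2), and equals −(η ⧢ ζ) e_2 when (i, j) = (2, 1), and this bracket satisfies antisymmetry and the Jacobi identity, making g := R⟨⟨X⟩⟩ × R⟨⟨X⟩⟩ (with first component proper) a Lie algebra. -/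
/-- The Lie bracket on pairs: [(u₁,u₂),(v₁,v₂)] = (0, u₁ ⧢ v₂ - v₁ ⧢ u₂). -/
def bracketG (u v : Series × Series) : Series × Series :=
  (0, shuffle u.1 v.2 - shuffle v.1 u.2)

/-- η e₁ = (η, 0). -/
def e1 (η : Word) : Series × Series := (deltaW η, 0)

/-- η e₂ = (0, η). -/
def e2 (η : Word) : Series × Series := (0, deltaW η)

/-- Post-Lie product of a word (appearing as η eᵢ) against ζ e₁ (right
argument in the e₁ component), producing the series carried in the eᵢ slot:
∅ ↶ ζe₁ = 0, (x₀η) ↶ ζe₁ = x₀(η ↶ ζe₁), (x₁η) ↶ ζe₁ = x₁(η ↶ ζe₁) + x₁(η ⧢ ζ). -/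
def pw1 : Word → Series → Series
  | [], _ => 0
  | false :: η, ζ => X0f (pw1 η ζ)
  | true :: η, ζ => X1f (pw1 η ζ) + X1f (shuffle (deltaW η) ζ)

/-- Post-Lie product against ζ e₂:
∅ ↶ ζe₂ = 0, (x₀η) ↶ ζe₂ = x₀(η ↶ ζe₂), (x₁η) ↶ ζe₂ = x₁(η ↶ ζe₂) + x₀(η ⧢ ζ). -/
def pw2 : Word → Series → Series
  | [], _ => 0
  | false :: η, ζ => X0f (pw2 η ζ)
  | true :: η, ζ => X1f (pw2 η ζ) + X0f (shuffle (deltaW η) ζ)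

/-- The post-Lie product ↶ on g, bilinear extension of the word-level rules. -/
def postL (u v : Series × Series) : Series × Series :=
  (fun w => ∑ n ∈ Finset.range (w.length + 1), ∑ f : Fin n → Bool,
      u.1 (List.ofFn f) * (pw1 (List.ofFn f) v.1 + pw2 (List.ofFn f) v.2) w,
   fun w => ∑ n ∈ Finset.range (w.length + 1), ∑ f : Fin n → Bool,
      u.2 (List.ofFn f) * (pw1 (List.ofFn f) v.1 + pw2 (List.ofFn f) v.2) w)

/-- Componentwise left concatenation by x₀. -/
def X0p (p : Series × Series) : Series × Series := (X0f p.1, X0f p.2)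

/-- Componentwise left concatenation by x₁. -/
def X1p (p : Series × Series) : Series × Series := (X1f p.1, X1f p.2)

/-- The derived Lie bracket ⟦x,y⟧ = x ↶ y - y ↶ x + [x,y]. -/
def dbr (x y : Series × Series) : Series × Series :=
  postL x y - postL y x + bracketG x y

lemma sh_zero_left (w : Word) (d : Series) : sh w 0 d = 0 := by
  induction w generalizing d with
  | nil => simp [sh]
  | cons a w ih =>
    simp only [sh]
    have h : (fun u : Word => (0:Series) (a :: u)) = (0:Series) := rfl
    rw [h, ih, ih]; ring

lemma sh_zero_right (w : Word) (c : Series) : sh w c 0 = 0 := by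
  induction w generalizing c with
  | nil => simp [sh]
  | cons a w ih =>
    simp only [sh]
    have h : (fun u : Word => (0:Series) (a :: u)) = (0:Series) := rfl
    rw [h, ih, ih]; ring

lemma sh_comm (w : Word) (c d : Series) : sh w c d = sh w d c := by
  induction w generalizing c d with
  | nil => simp [sh, mul_comm]
  | cons a w ih =>
    simp only [sh]
    rw [ih (fun u => c (a :: u)) d, ih c (fun u => d (a :: u)), add_comm]

lemma sh_add_right (w : Word) (c d e : Series) :
    sh w c (fun u => d u + e u) = sh w c d + sh w c e := by
  induction w generalizing c d e with
  | nil => simp [sh]; ring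
  | cons a w ih =>
    simp only [sh]
    rw [ih, ih]
    ring

lemma sh_sub_right (w : Word) (c d e : Series) :
    sh w c (d - e) = sh w c d - sh w c e := by
  induction w generalizing c d e with
  | nil => simp [sh]; ring
  | cons a w ih =>
    simp only [sh]
    have h1 : (fun u => (d - e) (a :: u)) =
        (fun u => d (a :: u)) - (fun u => e (a :: u)) := rfl
    rw [h1, ih, ih]
    ring

lemma sh_lcomm (w : Word) (a b c : Series) :
    sh w a (shuffle b c) = sh w b (shuffle a c) := by
  induction w generalizing a b c with
  | nil => simp [sh, shuffle, mul_comm, mul_assoc, mul_left_comm]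
  | cons x w ih =>
    simp only [sh]
    have h : ∀ (p q : Series), (fun u => shuffle p q (x :: u)) =
        fun u => shuffle (fun u' => p (x :: u')) q u + shuffle p (fun u' => q (x :: u')) u := by
      intro p q; funext u; simp [shuffle, sh]
    rw [h b c, h a c, sh_add_right, sh_add_right]
    rw [ih (fun u => a (x :: u)) b c, ih a (fun u => b (x :: u)) c, ih a b (fun u => c (x :: u))]
    ring

/-- the bracket on the tangent space of (G, ·) satisfies
[η eᵢ, ζ e_j] = (η ⧢ ζ) e_j δ_{i,1} - (η ⧢ ζ) eᵢ δ_{j,1} (so it vanishes for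
i = j, equals (η ⧢ ζ)e₂ for (i,j) = (1,2) and -(η ⧢ ζ)e₂ for (i,j) = (2,1)),
and it is antisymmetric and satisfies the Jacobi identity. -/
theorem bracketG_lie :
    (∀ η ζ : Word,
      bracketG (e1 η) (e1 ζ) = 0 ∧
      bracketG (e2 η) (e2 ζ) = 0 ∧
      bracketG (e1 η) (e2 ζ) = (0, shuffle (deltaW η) (deltaW ζ)) ∧
      bracketG (e2 η) (e1 ζ) = (0, -(shuffle (deltaW η) (deltaW ζ)))) ∧
    (∀ u v : Series × Series, bracketG u v = -bracketG v u) ∧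
    (∀ u v w : Series × Series,
      bracketG u (bracketG v w) + bracketG v (bracketG w u)
        + bracketG w (bracketG u v) = 0) := by
  refine ⟨?_, ?_, ?_⟩
  · intro η ζ
    refine ⟨?_, ?_, ?_, ?_⟩
    · ext w <;> simp [bracketG, e1, shuffle, sh_zero_left, sh_zero_right]
    · ext w <;> simp [bracketG, e2, shuffle, sh_zero_left, sh_zero_right]
    · ext w <;> simp [bracketG, e1, e2, shuffle, sh_zero_left, sh_zero_right]
    · ext w <;>
        simp [bracketG, e1, e2, shuffle, sh_zero_left, sh_zero_right, sh_comm w (deltaW ζ)]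
  · intro u v
    ext w <;> simp [bracketG] <;> ring
  · intro u v w
    ext x
    · simp [bracketG]
    · simp only [bracketG, Prod.snd_add, Prod.fst_add, Prod.fst_zero, Prod.snd_zero,
        Pi.add_apply, Pi.sub_apply, Pi.zero_apply, Pi.neg_apply]
      simp only [shuffle, Pi.sub_apply]
      rw [sh_sub_right, sh_sub_right, sh_sub_right]
      rw [sh_zero_left, sh_zero_left, sh_zero_left]
      have k1 := sh_lcomm x u.1 v.1 w.2
      have k2 := sh_lcomm x v.1 w.1 u.2
      have k3 := sh_lcomm x w.1 u.1 v.2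
      linarith [k1, k2, k3]
end
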